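/- Let n ≥ 3 be an integer. For ρ > 0 define k(s,ρ) = (−s)^{(n−3)/2} (s + 2ρ)^{(n−3)/2} ρ^{2−n} when −2ρ ≤ s ≤ 0, and k(s,ρ) = 0 otherwise. Then for all ρ > 0 and all s < 0: (i) k(s,ρ) ≤ 2^{n−2} |s|^{−1}, and (ii) k(s,ρ) ≤ 2^{(n−3)/2} |s|^{(n−3)/2} ρ^{(1−n)/2}. (These are the product-type symbol estimates, of orders p = −n/2 and l = n/2 − 1 after normalization, showing that the normal operator kernel is a paired Lagrangian distribution.) -/
import Mathlib


open scoped Real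

/-- The symbol `k(s,ρ) = (−s)^{(n−3)/2}(s+2ρ)^{(n−3)/2} ρ^{2−n}` of the normal operator of
the Minkowski light ray transform after the change of variable `s = τ − |ξ|`, `ρ = ‖ξ‖`,
supported in `−2ρ ≤ s ≤ 0`. -/
noncomputable def ksym (n : ℕ) (s ρ : ℝ) : ℝ :=
  if -2 * ρ ≤ s ∧ s ≤ 0 then
    (-s) ^ (((n : ℝ) - 3) / 2) * (s + 2 * ρ) ^ (((n : ℝ) - 3) / 2) * ρ ^ ((2 : ℝ) - n)
  else 0

/-- Product-type symbol estimates for the normal operator kernel, showing it is a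
paired Lagrangian distribution: `k(s,ρ) ≤ 2^{n−2}|s|⁻¹` and
`k(s,ρ) ≤ 2^{(n−3)/2} |s|^{(n−3)/2} ρ^{(1−n)/2}` for all `ρ > 0`, `s < 0`. -/
theorem ksym_estimates (n : ℕ) (hn : 3 ≤ n) :
    ∀ ρ : ℝ, 0 < ρ → ∀ s : ℝ, s < 0 →
      ksym n s ρ ≤ (2 : ℝ) ^ ((n : ℝ) - 2) * |s|⁻¹ ∧
      ksym n s ρ ≤ (2 : ℝ) ^ (((n : ℝ) - 3) / 2) * |s| ^ (((n : ℝ) - 3) / 2) *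
        ρ ^ (((1 : ℝ) - n) / 2) := by
  intro ρ hρ s hs
  have hn3 : (3:ℝ) ≤ (n:ℝ) := by exact_mod_cast hn
  have habs : |s| = -s := abs_of_neg hs
  unfold ksym
  split_ifs with h
  · obtain ⟨hl, _⟩ := h
    set a : ℝ := ((n : ℝ) - 3) / 2 with hadef
    have ha : 0 ≤ a := by rw [hadef]; linarith
    have hms : 0 < -s := by linarith
    have hle : -s ≤ 2 * ρ := by linarith
    have hle2 : s + 2 * ρ ≤ 2 * ρ := by linarith
    have hnn : 0 ≤ s + 2 * ρ := by linarith
    have h2ρ : (0:ℝ) < 2 * ρ := by linarith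
    -- common first step: replace s + 2ρ by 2ρ
    have step1 : (-s) ^ a * (s + 2 * ρ) ^ a * ρ ^ ((2:ℝ) - n)
        ≤ (-s) ^ a * (2 * ρ) ^ a * ρ ^ ((2:ℝ) - n) := by
      gcongr
    constructor
    · -- first estimate
      refine step1.trans ?_
      have e1 : (-s) ^ a = (-s) ^ (a + 1) * (-s)⁻¹ := by
        rw [Real.rpow_add hms, Real.rpow_one, mul_assoc,
          mul_inv_cancel₀ (ne_of_gt hms), mul_one]
      have e2 : (-s) ^ (a + 1) ≤ (2 * ρ) ^ (a + 1) :=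
        Real.rpow_le_rpow hms.le hle (by linarith)
      calc (-s) ^ a * (2 * ρ) ^ a * ρ ^ ((2:ℝ) - n)
          = (-s) ^ (a + 1) * ((-s)⁻¹ * ((2 * ρ) ^ a * ρ ^ ((2:ℝ) - n))) := by
            rw [e1]; ring
        _ ≤ (2 * ρ) ^ (a + 1) * ((-s)⁻¹ * ((2 * ρ) ^ a * ρ ^ ((2:ℝ) - n))) := by
            gcongr
        _ = (2 * ρ) ^ (a + 1) * (2 * ρ) ^ a * ρ ^ ((2:ℝ) - n) * (-s)⁻¹ := by ring
        _ = (2:ℝ) ^ ((n:ℝ) - 2) * |s|⁻¹ := by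
            rw [← Real.rpow_add h2ρ]
            have hexp : a + 1 + a = (n:ℝ) - 2 := by rw [hadef]; ring
            rw [hexp, Real.mul_rpow (by norm_num) hρ.le, mul_assoc ((2:ℝ) ^ ((n:ℝ)-2)),
              ← Real.rpow_add hρ]
            norm_num [habs]
    · -- second estimate
      refine step1.trans (le_of_eq ?_)
      rw [Real.mul_rpow (by norm_num) hρ.le, habs]
      have hρa : ρ ^ a * ρ ^ ((2:ℝ) - n) = ρ ^ (((1:ℝ) - n) / 2) := by
        rw [← Real.rpow_add hρ]
        congr 1
        rw [hadef]; ring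
      calc (-s) ^ a * ((2:ℝ) ^ a * ρ ^ a) * ρ ^ ((2:ℝ) - n)
          = (2:ℝ) ^ a * (-s) ^ a * (ρ ^ a * ρ ^ ((2:ℝ) - n)) := by ring
        _ = (2:ℝ) ^ a * (-s) ^ a * ρ ^ (((1:ℝ) - n) / 2) := by rw [hρa]
  · constructor <;> positivity
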